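/- Let P be a d-dimensional polytope in ℝ^d with inradius g and roof Γ(P) = {(x, t) ∈ ℝ^d × ℝ : 0 ≤ t ≤ g, x ∈ P(t)} ⊆ ℝ^{d+1}. Then for every r ≥ 0, the translation of ℝ^{d+1} by the vector r·e_{d+1} maps Γ(P((1+√2)r)) onto the r-interior Γ(P)(r) of Γ(P); consequently, the inradius of Γ(P) equals g/(1+√2). -/

import Mathlib

open MeasureTheory Metric Set Real
open scoped RealInnerProductSpace

/-- The `r`-interior of a set `P`: points of `P` at distance at least `r` from `∂P`. -/
noncomputable def innerInterior {d : ℕ} (P : Set (EuclideanSpace ℝ (Fin d))) (r : ℝ) :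
    Set (EuclideanSpace ℝ (Fin d)) :=
  {x ∈ P | r ≤ infDist x (frontier P)}

/-- The inradius of `P`: the largest `r` such that `P` contains a closed ball of radius `r`. -/
noncomputable def inradius {d : ℕ} (P : Set (EuclideanSpace ℝ (Fin d))) : ℝ :=
  sSup {r : ℝ | ∃ x, closedBall x r ⊆ P}

/-- The roof of a `d`-polytope `P` with inradius `g`:
`Γ(P) = {(x,t) : 0 ≤ t ≤ g, x ∈ P(t)} ⊆ ℝ^{d+1}`. -/
noncomputable def roofOf {d : ℕ} (P : Set (EuclideanSpace ℝ (Fin d))) (g : ℝ) :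
    Set (EuclideanSpace ℝ (Fin (d + 1))) :=
  {y | 0 ≤ y (Fin.last d) ∧ y (Fin.last d) ≤ g ∧
    (WithLp.toLp 2 (fun i : Fin d => y i.castSucc) : EuclideanSpace ℝ (Fin d)) ∈
      innerInterior P (y (Fin.last d))}

/- ### Auxiliary lemmas -/

/-- A preconnected set meeting both `t` and its complement meets the frontier of `t`. -/
lemma aux_crossing {X : Type*} [TopologicalSpace X] {s t : Set X} (hs : IsPreconnected s)
    {a b : X} (ha : a ∈ s) (hat : a ∈ t) (hb : b ∈ s) (hbt : b ∉ t) :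
    (s ∩ frontier t).Nonempty := by
  by_contra h
  rw [not_nonempty_iff_eq_empty] at h
  have hsub : s ⊆ interior t ∪ interior tᶜ := by
    intro z hz
    have hzf : z ∉ frontier t := fun hf => (eq_empty_iff_forall_notMem.1 h z) ⟨hz, hf⟩
    by_cases hcl : z ∈ closure t
    · left
      by_contra hzi
      exact hzf ⟨hcl, hzi⟩
    · exact Or.inr (by rwa [interior_compl, mem_compl_iff])
  have h1 : (s ∩ interior t).Nonempty := by
    refine ⟨a, ha, ?_⟩
    rcases hsub ha with h' | h'
    · exact h'
    · exact absurd (interior_subset h') (by simpa using hat)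
  have h2 : (s ∩ interior tᶜ).Nonempty := by
    refine ⟨b, hb, ?_⟩
    rcases hsub hb with h' | h'
    · exact absurd (interior_subset h') hbt
    · exact h'
  obtain ⟨z, -, hz1, hz2⟩ := hs _ _ isOpen_interior isOpen_interior hsub h1 h2
  exact (interior_subset hz2) (interior_subset hz1)

/-- Projection to the first `n` coordinates. -/
def projE {n : ℕ} (y : EuclideanSpace ℝ (Fin (n + 1))) : EuclideanSpace ℝ (Fin n) :=
  WithLp.toLp 2 (fun i : Fin n => y i.castSucc)

/-- The intersection of the halfspaces with normals `N` and constants `b`. -/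
def Hset {n m : ℕ} (N : Fin m → EuclideanSpace ℝ (Fin n)) (b : Fin m → ℝ) :
    Set (EuclideanSpace ℝ (Fin n)) :=
  ⋂ j, {x : EuclideanSpace ℝ (Fin n) | b j ≤ ⟪x, N j⟫}

lemma mem_Hset {n m : ℕ} {N : Fin m → EuclideanSpace ℝ (Fin n)} {b : Fin m → ℝ}
    {x : EuclideanSpace ℝ (Fin n)} : x ∈ Hset N b ↔ ∀ j, b j ≤ ⟪x, N j⟫ := by
  simp [Hset]

lemma isClosed_Hset {n m : ℕ} (N : Fin m → EuclideanSpace ℝ (Fin n)) (b : Fin m → ℝ) :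
    IsClosed (Hset N b) := by
  refine isClosed_iInter fun j => ?_
  exact isClosed_le continuous_const (continuous_id.inner continuous_const)

lemma frontier_Hset_exists {n m : ℕ} {N : Fin m → EuclideanSpace ℝ (Fin n)} {b : Fin m → ℝ}
    {z : EuclideanSpace ℝ (Fin n)} (hz : z ∈ frontier (Hset N b)) :
    ∃ j, ⟪z, N j⟫ ≤ b j := by
  by_contra h
  push_neg at h
  have hU : IsOpen (⋂ j, {x : EuclideanSpace ℝ (Fin n) | b j < ⟪x, N j⟫}) :=
    isOpen_iInter_of_finite fun j =>
      isOpen_lt continuous_const (continuous_id.inner continuous_const)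
  have hzU : z ∈ ⋂ j, {x : EuclideanSpace ℝ (Fin n) | b j < ⟪x, N j⟫} := by
    simpa using h
  have hsub : (⋂ j, {x : EuclideanSpace ℝ (Fin n) | b j < ⟪x, N j⟫}) ⊆ Hset N b := by
    intro w hw
    rw [mem_Hset]
    intro j
    exact le_of_lt (by simpa using mem_iInter.1 hw j)
  exact hz.2 (mem_interior.2 ⟨_, hsub, hU, hzU⟩)

lemma exists_frontier_dist_le {n m : ℕ} {N : Fin m → EuclideanSpace ℝ (Fin n)} {b : Fin m → ℝ}
    (hN : ∀ j, ‖N j‖ = 1) {x : EuclideanSpace ℝ (Fin n)} (hx : x ∈ Hset N b) (j : Fin m) :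
    ∃ z ∈ frontier (Hset N b), dist x z ≤ ⟪x, N j⟫ - b j := by
  set s : ℝ := ⟪x, N j⟫ - b j with hs
  have hs0 : 0 ≤ s := sub_nonneg.2 (mem_Hset.1 hx j)
  set y : EuclideanSpace ℝ (Fin n) := x - s • N j with hy
  have hNj2 : ⟪N j, N j⟫ = 1 := by
    rw [real_inner_self_eq_norm_sq, hN j]; norm_num
  have hyj : ⟪y, N j⟫ = b j := by
    simp only [hy, inner_sub_left, real_inner_smul_left, hNj2]
    ring
  have hdxy : dist x y = s := by
    rw [dist_eq_norm]
    simp only [hy, sub_sub_cancel, norm_smul, hN j, Real.norm_eq_abs, mul_one,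
      abs_of_nonneg hs0]
  by_cases hyH : y ∈ Hset N b
  · refine ⟨y, ⟨subset_closure hyH, ?_⟩, le_of_eq hdxy⟩
    intro hyint
    obtain ⟨ε, hε, hball⟩ := Metric.mem_nhds_iff.1 (mem_interior_iff_mem_nhds.1 hyint)
    have hmem : y - (ε / 2) • N j ∈ ball y ε := by
      rw [mem_ball, dist_eq_norm]
      simp only [sub_sub_cancel_left, norm_neg, norm_smul, hN j, Real.norm_eq_abs, mul_one]
      rw [abs_of_nonneg (by linarith)]
      linarith
    have := mem_Hset.1 (hball hmem) j
    simp only [inner_sub_left, real_inner_smul_left, hNj2, hyj] at this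
    linarith
  · obtain ⟨z, hzseg, hzf⟩ := aux_crossing (convex_segment x y).isPreconnected
      (left_mem_segment ℝ x y) hx (right_mem_segment ℝ x y) hyH
    refine ⟨z, hzf, ?_⟩
    have := dist_add_dist_of_mem_segment hzseg
    have hz2 : 0 ≤ dist z y := dist_nonneg
    linarith [hdxy ▸ this]

lemma frontier_dist_ge {n m : ℕ} {N : Fin m → EuclideanSpace ℝ (Fin n)} {b : Fin m → ℝ}
    (hN : ∀ j, ‖N j‖ = 1) {z : EuclideanSpace ℝ (Fin n)} (hz : z ∈ frontier (Hset N b))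
    (x : EuclideanSpace ℝ (Fin n)) : ∃ j, ⟪x, N j⟫ - b j ≤ dist x z := by
  obtain ⟨j, hj⟩ := frontier_Hset_exists hz
  refine ⟨j, ?_⟩
  have h1 : ⟪x - z, N j⟫ ≤ ‖x - z‖ * ‖N j‖ := real_inner_le_norm _ _
  rw [hN j, mul_one] at h1
  rw [inner_sub_left] at h1
  rw [dist_eq_norm]
  linarith

lemma innerInterior_Hset {n m : ℕ} {N : Fin m → EuclideanSpace ℝ (Fin n)} {b : Fin m → ℝ}
    (hm : 0 < m) (hN : ∀ j, ‖N j‖ = 1) {t : ℝ} (ht : 0 ≤ t) :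
    innerInterior (Hset N b) t = Hset N (fun j => b j + t) := by
  ext x
  simp only [innerInterior, mem_setOf_eq]
  constructor
  · rintro ⟨hxP, hd⟩
    rw [mem_Hset]
    intro j
    obtain ⟨z, hzf, hdz⟩ := exists_frontier_dist_le hN hxP j
    have := infDist_le_dist_of_mem (x := x) hzf
    have := mem_Hset.1 hxP j
    linarith
  · intro h'
    have h := mem_Hset.1 h'
    have hxP : x ∈ Hset N b := mem_Hset.2 fun j => by linarith [h j]
    refine ⟨hxP, ?_⟩
    obtain ⟨z0, hz0, -⟩ := exists_frontier_dist_le hN hxP ⟨0, hm⟩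
    by_contra hlt
    push_neg at hlt
    obtain ⟨z, hzf, hdz⟩ := (infDist_lt_iff ⟨z0, hz0⟩).1 hlt
    obtain ⟨j, hj⟩ := frontier_dist_ge hN hzf x
    linarith [h j]

lemma closedBall_subset_Hset_iff {n m : ℕ} {N : Fin m → EuclideanSpace ℝ (Fin n)}
    {b : Fin m → ℝ} (hN : ∀ j, ‖N j‖ = 1) {x : EuclideanSpace ℝ (Fin n)} {r : ℝ} (hr : 0 ≤ r) :
    closedBall x r ⊆ Hset N b ↔ x ∈ Hset N (fun j => b j + r) := by
  constructor
  · intro h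
    rw [mem_Hset]
    intro j
    have hNj2 : ⟪N j, N j⟫ = 1 := by
      rw [real_inner_self_eq_norm_sq, hN j]; norm_num
    have hmem : x - r • N j ∈ closedBall x r := by
      rw [mem_closedBall, dist_eq_norm]
      simp only [sub_sub_cancel_left, norm_neg, norm_smul, hN j, Real.norm_eq_abs, mul_one,
        abs_of_nonneg hr, le_refl]
    have := mem_Hset.1 (h hmem) j
    simp only [inner_sub_left, real_inner_smul_left, hNj2] at this
    linarith
  · intro h w hw
    rw [mem_Hset]
    intro j
    have h1 : |⟪w - x, N j⟫| ≤ ‖w - x‖ * ‖N j‖ := abs_real_inner_le_norm _ _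
    rw [hN j, mul_one] at h1
    have h2 : ‖w - x‖ ≤ r := by rwa [← dist_eq_norm, ← mem_closedBall]
    have h3 := mem_Hset.1 h j
    have h4 : -(r : ℝ) ≤ ⟪w - x, N j⟫ := by
      have := abs_le.1 h1
      linarith [this.1]
    have : ⟪w, N j⟫ = ⟪x, N j⟫ + ⟪w - x, N j⟫ := by
      rw [← inner_add_left]
      congr 1
      abel
    linarith

lemma inradius_Hset {n m : ℕ} {N : Fin m → EuclideanSpace ℝ (Fin n)} {b : Fin m → ℝ}
    (hm : 0 < m) (hN : ∀ j, ‖N j‖ = 1) (hcomp : IsCompact (Hset N b))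
    (hne : (Hset N b).Nonempty) :
    (∃ x, x ∈ Hset N (fun j => b j + inradius (Hset N b))) ∧ 0 ≤ inradius (Hset N b) ∧
      ∀ t, 0 ≤ t → ∀ x ∈ Hset N (fun j => b j + t), t ≤ inradius (Hset N b) := by
  obtain ⟨xs, hxs, hmax⟩ := hcomp.exists_isMaxOn hne
    ((continuous_infDist_pt (frontier (Hset N b))).continuousOn)
  set γ := infDist xs (frontier (Hset N b)) with hγ
  have hγ0 : 0 ≤ γ := infDist_nonneg
  have hSeq : {r : ℝ | ∃ x, closedBall x r ⊆ Hset N b} = Iic γ := by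
    ext r
    simp only [mem_setOf_eq, mem_Iic]
    constructor
    · rintro ⟨x, hx⟩
      rcases le_or_gt 0 r with hr | hr
      · have := (closedBall_subset_Hset_iff hN hr).1 hx
        rw [← innerInterior_Hset hm hN hr] at this
        exact le_trans this.2 (hmax this.1)
      · linarith
    · intro hrγ
      rcases lt_or_ge r 0 with hr | hr
      · exact ⟨xs, by rw [closedBall_eq_empty.2 hr]; exact empty_subset _⟩
      · refine ⟨xs, (closedBall_subset_Hset_iff hN hr).2 ?_⟩
        rw [← innerInterior_Hset hm hN hr]
        exact ⟨hxs, hrγ⟩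
  have hval : inradius (Hset N b) = γ := by
    rw [inradius, hSeq, csSup_Iic]
  refine ⟨⟨xs, ?_⟩, by rw [hval]; exact hγ0, ?_⟩
  · rw [hval, ← innerInterior_Hset hm hN hγ0]
    exact ⟨hxs, le_refl _⟩
  · intro t ht x hx
    rw [← innerInterior_Hset hm hN ht] at hx
    rw [hval]
    exact le_trans hx.2 (hmax hx.1)

lemma roofOf_Hset {n m : ℕ} {N : Fin m → EuclideanSpace ℝ (Fin n)} {b : Fin m → ℝ}
    (hm : 0 < m) (hN : ∀ j, ‖N j‖ = 1) (hcomp : IsCompact (Hset N b))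
    (hne : (Hset N b).Nonempty) :
    roofOf (Hset N b) (inradius (Hset N b)) =
      {y : EuclideanSpace ℝ (Fin (n + 1)) | 0 ≤ y (Fin.last n) ∧ ∀ j,
        b j + y (Fin.last n) ≤
          ⟪projE y, N j⟫} := by
  obtain ⟨-, -, hub⟩ := inradius_Hset hm hN hcomp hne
  ext y
  simp only [roofOf, mem_setOf_eq]
  constructor
  · rintro ⟨ht0, htg, hx⟩
    rw [innerInterior_Hset hm hN ht0] at hx
    exact ⟨ht0, fun j => mem_Hset.1 hx j⟩
  · rintro ⟨ht0, hx⟩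
    have hx' : projE y ∈
        Hset N (fun j => b j + y (Fin.last n)) := mem_Hset.2 hx
    exact ⟨ht0, hub _ ht0 _ hx', by rw [innerInterior_Hset hm hN ht0]; exact hx'⟩

lemma roofOf_empty {n : ℕ} (g : ℝ) : roofOf (∅ : Set (EuclideanSpace ℝ (Fin n))) g = ∅ := by
  ext y
  simp [roofOf, innerInterior]

/-- Append a last coordinate to a euclidean vector. -/
noncomputable def liftVec {d : ℕ} (v : EuclideanSpace ℝ (Fin d)) (a : ℝ) :
    EuclideanSpace ℝ (Fin (d + 1)) :=
  WithLp.toLp 2 (Fin.snoc (α := fun _ => ℝ) (WithLp.ofLp v) a)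

lemma projE_liftVec {d : ℕ} (v : EuclideanSpace ℝ (Fin d)) (a : ℝ) :
    projE (liftVec v a) = v := by
  ext i
  simp [projE, liftVec]

lemma liftVec_last {d : ℕ} (v : EuclideanSpace ℝ (Fin d)) (a : ℝ) :
    liftVec v a (Fin.last d) = a := by
  simp [liftVec]

lemma inner_liftVec {d : ℕ} (y : EuclideanSpace ℝ (Fin (d + 1)))
    (v : EuclideanSpace ℝ (Fin d)) (a : ℝ) :
    ⟪y, liftVec v a⟫ = ⟪projE y, v⟫ + y (Fin.last d) * a := by
  simp only [PiLp.inner_apply, RCLike.inner_apply, conj_trivial]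
  rw [Fin.sum_univ_castSucc]
  simp [liftVec, projE, mul_comm]

lemma norm_liftVec {d : ℕ} (v : EuclideanSpace ℝ (Fin d)) (a : ℝ) :
    ‖liftVec v a‖ = Real.sqrt (‖v‖ ^ 2 + a ^ 2) := by
  have h1 : ∑ i : Fin d, ‖v i‖ ^ 2 = ‖v‖ ^ 2 := by
    rw [EuclideanSpace.norm_eq, Real.sq_sqrt]
    positivity
  rw [EuclideanSpace.norm_eq, Fin.sum_univ_castSucc]
  simp only [liftVec, PiLp.toLp_apply, Fin.snoc_castSucc, Fin.snoc_last, Real.norm_eq_abs, sq_abs]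
  simp only [Real.norm_eq_abs, sq_abs] at h1
  rw [h1]

/-- For a `d`-polytope `P` with inradius `g` and roof `Γ(P) ⊆ ℝ^{d+1}`:
for every `r ≥ 0` the translation by `r·e_{d+1}` maps `Γ(P((1+√2)r))` onto the `r`-interior
of `Γ(P)`; consequently the inradius of `Γ(P)` is `g/(1+√2)`. -/
theorem statement18 {d m : ℕ} (hd : 0 < d) (P : Set (EuclideanSpace ℝ (Fin d)))
    (N : Fin m → EuclideanSpace ℝ (Fin d)) (c : Fin m → ℝ)
    (hN : ∀ j, ‖N j‖ = 1)
    (hP : P = ⋂ j, {x : EuclideanSpace ℝ (Fin d) | c j ≤ ⟪x, N j⟫})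
    (hcomp : IsCompact P)
    (hint : (interior P).Nonempty)
    (g : ℝ) (hg : g = inradius P) :
    (∀ r : ℝ, 0 ≤ r →
      (fun y : EuclideanSpace ℝ (Fin (d + 1)) =>
          y + r • EuclideanSpace.single (Fin.last d) (1 : ℝ)) ''
        roofOf (innerInterior P ((1 + Real.sqrt 2) * r))
          (inradius (innerInterior P ((1 + Real.sqrt 2) * r))) =
      innerInterior (roofOf P g) r) ∧
    inradius (roofOf P g) = g / (1 + Real.sqrt 2) := by
  have hs2 : Real.sqrt 2 * Real.sqrt 2 = 2 := Real.mul_self_sqrt (by norm_num)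
  set s2 : ℝ := Real.sqrt 2 with hs2def
  have hs2pos : 0 < s2 := Real.sqrt_pos.2 (by norm_num)
  have h1s2 : (0 : ℝ) < 1 + s2 := by linarith
  have hscale : ∀ u w : ℝ, u ≤ s2⁻¹ * w ↔ s2 * u ≤ w := by
    intro u w
    rw [inv_mul_eq_div, le_div_iff₀ hs2pos, mul_comm]
  have hinv : ∀ z : ℝ, s2 * (s2⁻¹ * z) = z := by
    intro z
    field_simp
  -- m is positive
  have hm : 0 < m := by
    rcases Nat.eq_zero_or_pos m with hm0 | hm
    · exfalso
      subst hm0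
      have hPuniv : P = univ := by rw [hP]; exact iInter_of_empty _
      obtain ⟨R, hR⟩ := (hPuniv ▸ hcomp).isBounded.subset_closedBall 0
      have hp : EuclideanSpace.single (⟨0, hd⟩ : Fin d) (|R| + 1) ∈ closedBall 0 R :=
        hR (mem_univ _)
      rw [mem_closedBall, dist_zero_right, EuclideanSpace.norm_single, Real.norm_eq_abs,
        abs_of_nonneg (by positivity)] at hp
      have := le_abs_self R
      linarith
    · exact hm
  -- transfer everything to `Hset N c`
  have hPH : P = Hset N c := hP
  have hPcomp' : IsCompact (Hset N c) := hPH ▸ hcomp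
  have hPne : (Hset N c).Nonempty := hPH ▸ ⟨hint.some, interior_subset hint.some_mem⟩
  have hgH : inradius (Hset N c) = g := by rw [← hPH, ← hg]
  obtain ⟨⟨xs, hxs⟩, hg0, hub⟩ := inradius_Hset hm hN hPcomp' hPne
  rw [hgH] at hxs hg0 hub
  -- the normals of the roof
  set M : Fin (m + 1) → EuclideanSpace ℝ (Fin (d + 1)) :=
    Fin.snoc (fun j => s2⁻¹ • liftVec (N j) (-1))
      (EuclideanSpace.single (Fin.last d) (1 : ℝ)) with hMdef
  set β : ℝ → Fin (m + 1) → ℝ :=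
    fun s => Fin.snoc (fun j => s2⁻¹ * (c j + s)) 0 with hβdef
  have hMc : ∀ j : Fin m, M j.castSucc = s2⁻¹ • liftVec (N j) (-1) := by
    intro j
    rw [hMdef]
    exact Fin.snoc_castSucc _ _ _
  have hMl : M (Fin.last m) = EuclideanSpace.single (Fin.last d) (1 : ℝ) := by
    rw [hMdef]
    exact Fin.snoc_last _ _
  have hβc : ∀ s (j : Fin m), β s j.castSucc = s2⁻¹ * (c j + s) := by
    intro s j
    simp only [hβdef]
    exact Fin.snoc_castSucc _ _ _
  have hβl : ∀ s, β s (Fin.last m) = 0 := by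
    intro s
    simp only [hβdef]
    exact Fin.snoc_last _ _
  have hM : ∀ k, ‖M k‖ = 1 := by
    intro k
    refine Fin.lastCases ?_ (fun j => ?_) k
    · rw [hMl, EuclideanSpace.norm_single]
      norm_num
    · rw [hMc, norm_smul, norm_liftVec, hN j]
      have : (1 : ℝ) ^ 2 + (-1 : ℝ) ^ 2 = 2 := by norm_num
      rw [this, Real.norm_eq_abs, abs_of_nonneg (by positivity)]
      rw [← hs2def]
      field_simp
  -- membership in roof halfspace systems
  have hmemM : ∀ (b' : Fin (m + 1) → ℝ) (y : EuclideanSpace ℝ (Fin (d + 1))),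
      y ∈ Hset M b' ↔
        (∀ j : Fin m, s2 * b' j.castSucc + y (Fin.last d) ≤ ⟪projE y, N j⟫) ∧
          b' (Fin.last m) ≤ y (Fin.last d) := by
    intro b' y
    rw [mem_Hset]
    have hinner_c : ∀ j : Fin m, ⟪y, M j.castSucc⟫ =
        s2⁻¹ * (⟪projE y, N j⟫ + y (Fin.last d) * (-1)) := by
      intro j
      rw [hMc, real_inner_smul_right, inner_liftVec]
    have hinner_l : ⟪y, M (Fin.last m)⟫ = y (Fin.last d) := by
      rw [hMl]
      have := EuclideanSpace.inner_single_right (𝕜 := ℝ) (Fin.last d) 1 y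
      simpa using this
    constructor
    · intro h
      constructor
      · intro j
        have hj := h j.castSucc
        rw [hinner_c, hscale] at hj
        linarith
      · have := h (Fin.last m)
        rwa [hinner_l] at this
    · rintro ⟨h1, h2⟩ k
      refine Fin.lastCases ?_ (fun j => ?_) k
      · rwa [hinner_l]
      · rw [hinner_c, hscale]
        linarith [h1 j]
  -- the roof of P
  have hroofeq : roofOf P g = Hset M (β 0) := by
    rw [hPH, ← hgH, roofOf_Hset hm hN hPcomp' hPne]
    ext y
    rw [mem_setOf_eq, hmemM]
    constructor
    · rintro ⟨h0, hj⟩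
      refine ⟨fun j => ?_, by rw [hβl]; exact h0⟩
      rw [hβc, hinv]
      linarith [hj j]
    · rintro ⟨h1, h2⟩
      refine ⟨by rw [hβl] at h2; exact h2, fun j => ?_⟩
      have := h1 j
      rw [hβc, hinv] at this
      linarith
  constructor
  · -- the translation statement
    intro r hr
    have hs0 : 0 ≤ (1 + s2) * r := by positivity
    have hQ : innerInterior P ((1 + s2) * r) = Hset N (fun j => c j + (1 + s2) * r) := by
      rw [hPH]
      exact innerInterior_Hset hm hN hs0
    have hRHS : innerInterior (roofOf P g) r = Hset M (fun k => β 0 k + r) := by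
      rw [hroofeq]
      exact innerInterior_Hset (Nat.succ_pos m) hM hr
    rw [hQ, hRHS]
    have hvlast : ∀ w : EuclideanSpace ℝ (Fin (d + 1)),
        (w + r • EuclideanSpace.single (Fin.last d) (1 : ℝ)) (Fin.last d) =
          w (Fin.last d) + r := by
      intro w
      simp [EuclideanSpace.single_apply]
    have hvproj : ∀ w : EuclideanSpace ℝ (Fin (d + 1)),
        projE (w + r • EuclideanSpace.single (Fin.last d) (1 : ℝ)) = projE w := by
      intro w
      ext i
      simp [projE, EuclideanSpace.single_apply, (Fin.castSucc_lt_last i).ne]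
    by_cases hQne : (Hset N (fun j => c j + (1 + s2) * r)).Nonempty
    · have hQsub : Hset N (fun j => c j + (1 + s2) * r) ⊆ Hset N c := by
        intro x hx
        rw [mem_Hset]
        intro j
        have := mem_Hset.1 hx j
        linarith
      have hQcomp : IsCompact (Hset N (fun j => c j + (1 + s2) * r)) :=
        hPcomp'.of_isClosed_subset (isClosed_Hset _ _) hQsub
      rw [roofOf_Hset hm hN hQcomp hQne]
      ext y
      simp only [mem_image, mem_setOf_eq]
      rw [hmemM]
      constructor
      · rintro ⟨w, ⟨hw0, hwj⟩, rfl⟩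
        refine ⟨fun j => ?_, ?_⟩
        · rw [hvlast, hvproj, hβc, mul_add, hinv]
          have := hwj j
          nlinarith [hwj j]
        · rw [hvlast, hβl]
          linarith
      · rintro ⟨h1, h2⟩
        rw [hβl] at h2
        have hsublast : (y - r • EuclideanSpace.single (Fin.last d) (1 : ℝ)) (Fin.last d) =
            y (Fin.last d) - r := by
          simp [EuclideanSpace.single_apply]
        have hsubproj : projE (y - r • EuclideanSpace.single (Fin.last d) (1 : ℝ)) =
            projE y := by
          ext i
          simp [projE, EuclideanSpace.single_apply, (Fin.castSucc_lt_last i).ne]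
        refine ⟨y - r • EuclideanSpace.single (Fin.last d) (1 : ℝ), ⟨?_, ?_⟩, by abel⟩
        · rw [hsublast]
          linarith
        · intro j
          rw [hsublast, hsubproj]
          have hj := h1 j
          rw [hβc, mul_add, hinv] at hj
          nlinarith
    · rw [not_nonempty_iff_eq_empty] at hQne
      rw [hQne, roofOf_empty, image_empty]
      symm
      rw [eq_empty_iff_forall_notMem]
      intro y hy
      rw [hmemM] at hy
      obtain ⟨h1, h2⟩ := hy
      rw [hβl] at h2
      have hmem : projE y ∈ Hset N (fun j => c j + (1 + s2) * r) := by
        rw [mem_Hset]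
        intro j
        have := h1 j
        rw [hβc, mul_add, hinv] at this
        nlinarith
      rw [eq_empty_iff_forall_notMem] at hQne
      exact hQne _ hmem
  · -- the inradius statement
    rw [hroofeq, inradius]
    have hSeq : {r : ℝ | ∃ y, closedBall y r ⊆ Hset M (β 0)} = Iic (g / (1 + s2)) := by
      ext r
      simp only [mem_setOf_eq, mem_Iic]
      constructor
      · rintro ⟨y, hy⟩
        rcases le_or_gt 0 r with hr | hr
        · have hy' := (closedBall_subset_Hset_iff hM hr).1 hy
          rw [hmemM] at hy'
          obtain ⟨h1, h2⟩ := hy'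
          rw [hβl] at h2
          have hmem : projE y ∈ Hset N (fun j => c j + (1 + s2) * r) := by
            rw [mem_Hset]
            intro j
            have := h1 j
            rw [hβc, mul_add, hinv] at this
            nlinarith
          have hle := hub ((1 + s2) * r) (by positivity) _ hmem
          rw [le_div_iff₀ h1s2]
          linarith
        · have : 0 ≤ g / (1 + s2) := div_nonneg hg0 (le_of_lt h1s2)
          linarith
      · intro hrg
        rcases lt_or_ge r 0 with hr | hr
        · exact ⟨0, by rw [closedBall_eq_empty.2 hr]; exact empty_subset _⟩
        · refine ⟨liftVec xs r, (closedBall_subset_Hset_iff hM hr).2 ?_⟩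
          rw [hmemM]
          rw [projE_liftVec]
          have hlast : liftVec xs r (Fin.last d) = r := liftVec_last _ _
          have hrg' : (1 + s2) * r ≤ g := by
            rw [le_div_iff₀ h1s2] at hrg
            linarith
          constructor
          · intro j
            rw [hlast, hβc, mul_add, hinv]
            have := mem_Hset.1 hxs j
            nlinarith
          · rw [hlast, hβl]
            linarith
    rw [hSeq, csSup_Iic]
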